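/- arXiv:1306.1641 — 3 statements merged into one kernel-verified Lean document; each statement's English description precedes it below -/
import Mathlib

section
/- Let χ be a divisive weight vector (χ_{j−1} divides χ_j for 1 ≤ j ≤ n) and let 1 ≤ i ≤ n. Then g_i is injective on the open unit disc: if w, w' ∈ ℂ^i satisfy |w| < 1, |w'| < 1 and g_i(w) = g_i(w') in ℙ(χ), then w = w'. -/
/-!
If `gᵢ(w) = gᵢ(w')`, some unit `t` satisfies `z'ⱼ = t ^ χⱼ * zⱼ` for the two
representatives.
Coordinate `n - i` of both is a positive real, so `t ^ χ_{n-i} = 1`. Since `χ` is divisive,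
`χ_{n-i}` divides every later weight, so `t` acts trivially on the last `i` coordinates,
which are `w` and `w'`.
-/

noncomputable section

open Complex

/-- The unit sphere `S^{2n+1} ⊆ ℂ^{n+1}`. -/
abbrev Sph (n : ℕ) := {z : Fin (n + 1) → ℂ // ∑ j, Complex.normSq (z j) = 1}

/-- The relation identifying points of `S^{2n+1}` in the same orbit of the weighted
circle `T(χ) = {(t^{χ₀},…,t^{χₙ}) : |t| = 1}`, acting coordinatewise. -/
def WPrel (n : ℕ) (χ : Fin (n + 1) → ℕ) (z z' : Sph n) : Prop :=
  ∃ t : ℂ, ‖t‖ = 1 ∧ ∀ j, z'.1 j = t ^ (χ j) * z.1 j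

/-- The weighted projective space `ℙ(χ) = S^{2n+1}/T(χ)` with the quotient topology. -/
abbrev WPS (n : ℕ) (χ : Fin (n + 1) → ℕ) := Quot (WPrel n χ)

/-- The vector `(0,…,0,√(1−|w|²),w₁,…,wᵢ) ∈ ℂ^{n+1}` (the square root in coordinate
`n − i`). -/
def zvec (n i : ℕ) (hi : i ≤ n) (w : Fin i → ℂ) : Fin (n + 1) → ℂ := fun j =>
  Fin.append
    (Fin.append (fun _ : Fin (n - i) => (0 : ℂ))
      (fun _ : Fin 1 => ((Real.sqrt (1 - ∑ k, Complex.normSq (w k)) : ℝ) : ℂ)))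
    w (Fin.cast (by omega) j)

lemma zvec_mem (n i : ℕ) (hi : i ≤ n) (w : Fin i → ℂ)
    (hw : ∑ k, Complex.normSq (w k) ≤ 1) :
    ∑ j, Complex.normSq (zvec n i hi w j) = 1 := by
  classical
  set c : ℂ := ((Real.sqrt (1 - ∑ k, Complex.normSq (w k)) : ℝ) : ℂ) with hc
  set F : Fin (n - i + 1 + i) → ℂ :=
    Fin.append (Fin.append (fun _ : Fin (n - i) => (0 : ℂ)) (fun _ : Fin 1 => c)) w with hF
  have key : ∑ j : Fin (n + 1), Complex.normSq (zvec n i hi w j)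
      = ∑ j : Fin (n - i + 1 + i), Complex.normSq (F j) :=
    Fintype.sum_equiv (finCongr (by omega)) _ _ (fun j => rfl)
  rw [key, Fin.sum_univ_add]
  have h1 : ∑ j : Fin (n - i + 1), Complex.normSq (F (Fin.castAdd i j))
      = 1 - ∑ k, Complex.normSq (w k) := by
    have : ∀ j : Fin (n - i + 1), F (Fin.castAdd i j)
        = Fin.append (fun _ : Fin (n - i) => (0 : ℂ)) (fun _ : Fin 1 => c) j := fun j => by
      rw [hF, Fin.append_left]
    simp only [this]
    rw [Fin.sum_univ_add]
    simp only [Fin.append_left, Fin.append_right]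
    have h0 : 0 ≤ 1 - ∑ k, Complex.normSq (w k) := by linarith
    simp [hc, Complex.normSq_ofReal, Real.mul_self_sqrt h0]
  have h2 : ∀ j : Fin i, F (Fin.natAdd (n - i + 1) j) = w j := fun j => by
    rw [hF, Fin.append_right]
  simp only [h2]
  rw [h1]
  ring

/-- The characteristic map `gᵢ : D^{2i} → ℙ(χ)`,
`gᵢ(w) = [0,…,0,√(1−|w|²),w₁,…,wᵢ]`, defined on the closed unit disc. -/
def gmap (n : ℕ) (χ : Fin (n + 1) → ℕ) (i : ℕ) (hi : i ≤ n)
    (w : {w : Fin i → ℂ // ∑ k, Complex.normSq (w k) ≤ 1}) : WPS n χ :=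
  Quot.mk _ ⟨zvec n i hi w.1, zvec_mem n i hi w.1 w.2⟩

lemma WPrel_equivalence (n : ℕ) (χ : Fin (n + 1) → ℕ) : Equivalence (WPrel n χ) where
  refl _ := ⟨1, by simp, fun _ => by simp⟩
  symm := by
    rintro _ _ ⟨t, ht, h⟩
    have ht0 : t ≠ 0 := norm_ne_zero_iff.mp (by simp [ht])
    exact ⟨t⁻¹, by simp [ht], fun j => by
      rw [h j, ← mul_assoc, ← mul_pow, inv_mul_cancel₀ ht0, one_pow, one_mul]⟩
  trans := by
    rintro _ _ _ ⟨t, ht, h⟩ ⟨s, hs, h'⟩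
    exact ⟨s * t, by simp [ht, hs], fun j => by rw [h' j, h j, mul_pow, mul_assoc]⟩

lemma zvec_apply_sqrt (n i : ℕ) (hi : i ≤ n) (w : Fin i → ℂ) :
    zvec n i hi w ⟨n - i, by omega⟩
      = ((Real.sqrt (1 - ∑ k, Complex.normSq (w k)) : ℝ) : ℂ) := by
  have h : (Fin.cast (by omega : n + 1 = n - i + 1 + i) ⟨n - i, by omega⟩ :
      Fin (n - i + 1 + i)) = Fin.castAdd i (Fin.natAdd (n - i) (0 : Fin 1)) := by
    ext; simp
  simp only [zvec, h, Fin.append_left, Fin.append_right]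

lemma zvec_apply_tail (n i : ℕ) (hi : i ≤ n) (w : Fin i → ℂ) (k : Fin i) :
    zvec n i hi w ⟨n - i + 1 + k, by omega⟩ = w k := by
  have h : (Fin.cast (by omega : n + 1 = n - i + 1 + i) ⟨n - i + 1 + k, by omega⟩ :
      Fin (n - i + 1 + i)) = Fin.natAdd (n - i + 1) k := by
    ext; simp
  simp only [zvec, h, Fin.append_right]

lemma Fin.dvd_of_le_of_forall_dvd_succ {α : Type*} [Monoid α] {m : ℕ} {χ : Fin (m + 1) → α}
    (hdiv : ∀ j : Fin m, χ j.castSucc ∣ χ j.succ) {p q : Fin (m + 1)} (hpq : p ≤ q) :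
    χ p ∣ χ q := by
  rcases hpq.eq_or_lt with rfl | hlt
  · exact dvd_rfl
  · exact (Fin.liftFun_iff_succ (· ∣ ·)).mpr hdiv hlt

lemma Complex.eq_one_of_norm_eq_one_of_ofReal_eq_mul {u : ℂ} {a a' : ℝ} (hu : ‖u‖ = 1)
    (ha : 0 < a) (ha' : 0 < a') (h : (a' : ℂ) = u * a) : u = 1 := by
  have hu_real : u = ((a' / a : ℝ) : ℂ) := by
    rw [ofReal_div, h, mul_div_cancel_right₀ _ (ofReal_ne_zero.mpr ha.ne')]
  have hratio : a' / a = 1 := by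
    rwa [hu_real, norm_real, Real.norm_of_nonneg (div_pos ha' ha).le] at hu
  rw [hu_real, hratio, ofReal_one]

theorem gmap_injective_on_open_disc_general (n : ℕ) (χ : Fin (n + 1) → ℕ)
    (hdiv : ∀ j : Fin n, χ j.castSucc ∣ χ j.succ)
    (i : ℕ) (hi : i ≤ n) (w w' : Fin i → ℂ)
    (hw : ∑ k, Complex.normSq (w k) < 1) (hw' : ∑ k, Complex.normSq (w' k) < 1)
    (heq : gmap n χ i hi ⟨w, hw.le⟩ = gmap n χ i hi ⟨w', hw'.le⟩) :
    w = w' := by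
  obtain ⟨t, ht, hcoord⟩ := (WPrel_equivalence n χ).eqvGen_iff.mp (Quot.eqvGen_exact heq)
  have hroot : t ^ χ ⟨n - i, by omega⟩ = 1 := by
    have hsqrt := hcoord ⟨n - i, by omega⟩
    simp only [zvec_apply_sqrt] at hsqrt
    exact eq_one_of_norm_eq_one_of_ofReal_eq_mul (by rw [norm_pow, ht, one_pow])
      (Real.sqrt_pos.mpr (by linarith)) (Real.sqrt_pos.mpr (by linarith)) hsqrt
  funext k
  obtain ⟨m, hm⟩ := Fin.dvd_of_le_of_forall_dvd_succ hdiv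
    (show (⟨n - i, by omega⟩ : Fin (n + 1)) ≤ ⟨n - i + 1 + k, by omega⟩ from
      Fin.mk_le_mk.mpr (by omega))
  have hk := hcoord ⟨n - i + 1 + k, by omega⟩
  simp only [zvec_apply_tail, hm, pow_mul, hroot, one_pow, one_mul] at hk
  exact hk.symm

/-- For a divisive weight vector `χ` and `1 ≤ i ≤ n`, the characteristic map `gᵢ` is
injective on the open unit disc: if `|w| < 1`, `|w'| < 1` and `gᵢ(w) = gᵢ(w')` in
`ℙ(χ)`, then `w = w'`. -/
theorem gmap_injective_on_open_disc (n : ℕ) (χ : Fin (n + 1) → ℕ) (hpos : ∀ j, 0 < χ j)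
    (hdiv : ∀ j : Fin n, χ j.castSucc ∣ χ j.succ)
    (i : ℕ) (hi1 : 1 ≤ i) (hi : i ≤ n) (w w' : Fin i → ℂ)
    (hw : ∑ k, Complex.normSq (w k) < 1) (hw' : ∑ k, Complex.normSq (w' k) < 1)
    (heq : gmap n χ i hi ⟨w, hw.le⟩ = gmap n χ i hi ⟨w', hw'.le⟩) :
    w = w' :=
  gmap_injective_on_open_disc_general n χ hdiv i hi w w' hw hw' heq
end
end

section
/- Let χ be a divisive weight vector (χ_{j−1} divides χ_j for 1 ≤ j ≤ n) and let 1 ≤ i ≤ n. Then the restriction of g_i to the open unit disc {w ∈ ℂ^i : |w| < 1} is a homeomorphism onto the subspace {[z] ∈ ℙ(χ) : z_0 = ⋯ = z_{n−i−1} = 0, z_{n−i} ≠ 0} of ℙ(χ) (for i = n the condition is simply z_0 ≠ 0). -/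
noncomputable section

open Complex

/-- The open `2i`-cell `{[z] ∈ ℙ(χ) : z₀ = ⋯ = z_{n−i−1} = 0, z_{n−i} ≠ 0}`. -/
def cell (n : ℕ) (χ : Fin (n + 1) → ℕ) (i : ℕ) : Set (WPS n χ) :=
  {p | ∃ z : Sph n, (∀ j : Fin (n + 1), (j : ℕ) + i < n → z.1 j = 0) ∧
    z.1 ⟨n - i, Nat.lt_succ_of_le (Nat.sub_le n i)⟩ ≠ 0 ∧ p = Quot.mk _ z}

/-! The inverse of `gᵢ` on the cell is `[z] ↦ (σ^{χₖ/χ_{n−i}} zₖ)ₖ` with `σ = z̄_{n−i}/|z_{n−i}|`.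
By divisibility, multiplying `zₖ` by `σ^{χₖ/χ_{n−i}}` is the action of any `χ_{n−i}`-th root `t`
of `σ`, and that action turns `z_{n−i}` into `σ z_{n−i} = |z_{n−i}| > 0`. The formula is
`T(χ)`-invariant and continuous on the open saturated set `z_{n−i} ≠ 0`, so it descends to a
continuous map on the quotient. -/

open ComplexConjugate

lemma Fin.dvd_of_le_of_divisive {n : ℕ} {χ : Fin (n + 1) → ℕ}
    (hdiv : ∀ j : Fin n, χ j.castSucc ∣ χ j.succ) {a b : Fin (n + 1)} (hab : a ≤ b) :
    χ a ∣ χ b := by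
  have hmono : Monotone (Associates.mk ∘ χ) :=
    Fin.monotone_iff_le_succ.mpr fun j => Associates.mk_le_mk_iff_dvd.mpr (hdiv j)
  exact Associates.mk_le_mk_iff_dvd.mp (hmono hab)

section Indices

variable {n i : ℕ}

def pivot (n i : ℕ) : Fin (n + 1) := ⟨n - i, Nat.lt_succ_of_le (Nat.sub_le n i)⟩

def tailIdx (hi : i ≤ n) (k : Fin i) : Fin (n + 1) := ⟨n - i + 1 + k, by omega⟩

lemma pivot_le_tailIdx (hi : i ≤ n) (k : Fin i) : pivot n i ≤ tailIdx hi k :=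
  Fin.le_iff_val_le_val.mpr (by simp [pivot, tailIdx]; omega)

lemma lt_or_eq_pivot_or_eq_tailIdx (hi : i ≤ n) (j : Fin (n + 1)) :
    (j : ℕ) < n - i ∨ j = pivot n i ∨ ∃ k, j = tailIdx hi k := by
  rcases lt_trichotomy (j : ℕ) (n - i) with hj | hj | hj
  · exact .inl hj
  · exact .inr (.inl (Fin.ext hj))
  · exact .inr (.inr ⟨⟨j - (n - i) - 1, by omega⟩, Fin.ext (by simp [tailIdx]; omega)⟩)

lemma sum_eq_pivot_add_sum_tailIdx {M : Type*} [AddCommMonoid M] (hi : i ≤ n)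
    {f : Fin (n + 1) → M} (hf : ∀ j : Fin (n + 1), (j : ℕ) < n - i → f j = 0) :
    ∑ j, f j = f (pivot n i) + ∑ k, f (tailIdx hi k) := by
  rw [← (finCongr (show n - i + 1 + i = n + 1 by omega)).sum_comp, Fin.sum_univ_add,
    Fin.sum_univ_add, Fin.sum_univ_one, Finset.sum_eq_zero fun j _ => hf _ (by simp), zero_add]
  rfl

lemma zvec_of_lt (hi : i ≤ n) (w : Fin i → ℂ) {j : Fin (n + 1)} (hj : (j : ℕ) < n - i) :
    zvec n i hi w j = 0 := by
  have : Fin.cast (by omega) j = Fin.castAdd i (Fin.castAdd 1 (⟨j, hj⟩ : Fin (n - i))) :=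
    Fin.ext rfl
  rw [zvec, this, Fin.append_left, Fin.append_left]

lemma zvec_pivot (hi : i ≤ n) (w : Fin i → ℂ) :
    zvec n i hi w (pivot n i) = (√(1 - ∑ k, normSq (w k)) : ℂ) := by
  have : Fin.cast (by omega) (pivot n i) = Fin.castAdd i (Fin.natAdd (n - i) (0 : Fin 1)) :=
    Fin.ext rfl
  rw [zvec, this, Fin.append_left, Fin.append_right]

lemma zvec_tailIdx (hi : i ≤ n) (w : Fin i → ℂ) (k : Fin i) :
    zvec n i hi w (tailIdx hi k) = w k := by
  have : Fin.cast (by omega) (tailIdx hi k) = Fin.natAdd (n - i + 1) k := Fin.ext rfl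
  rw [zvec, this, Fin.append_right]

lemma continuous_zvec (hi : i ≤ n) : Continuous (zvec n i hi) := by
  have hsqrt : Continuous fun w : Fin i → ℂ => (√(1 - ∑ k, normSq (w k)) : ℂ) := by fun_prop
  have happend : Continuous fun w : Fin i → ℂ => Fin.append
      (Fin.append (fun _ : Fin (n - i) => (0 : ℂ)) fun _ : Fin 1 => (√(1 - ∑ k, normSq (w k)) : ℂ))
      w :=
    (Fin.continuous_append (X := ℂ) (n - i + 1) i).comp <|
      ((Fin.continuous_append (X := ℂ) (n - i) 1).comp <|
        (continuous_const (y := fun _ => 0)).prodMk (continuous_pi fun _ => hsqrt)).prodMk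
        continuous_id
  exact continuous_pi fun j => (continuous_apply _).comp happend

end Indices

section Phase

/-- The unit complex number rotating `u ≠ 0` onto the positive real axis (`phase 0 = 0`). -/
def phase (u : ℂ) : ℂ := conj u / (‖u‖ : ℂ)

lemma norm_phase {u : ℂ} (hu : u ≠ 0) : ‖phase u‖ = 1 := by
  rw [phase, norm_div, Complex.norm_conj, Complex.norm_real, norm_norm,
    div_self (norm_ne_zero_iff.mpr hu)]

lemma phase_mul_self (u : ℂ) : phase u * u = ‖u‖ := by
  rcases eq_or_ne u 0 with rfl | hu
  · simp [phase]
  rw [phase, div_mul_eq_mul_div, mul_comm, Complex.mul_conj, Complex.normSq_eq_norm_sq,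
    Complex.ofReal_pow, sq, mul_div_cancel_right₀ _ (by exact_mod_cast norm_ne_zero_iff.mpr hu)]

lemma phase_ofReal_of_pos {r : ℝ} (hr : 0 < r) : phase r = 1 := by
  rw [phase, Complex.conj_ofReal, Complex.norm_real, Real.norm_of_nonneg hr.le,
    div_self (by exact_mod_cast hr.ne')]

lemma phase_unit_pow_mul {t : ℂ} (ht : ‖t‖ = 1) (a : ℕ) (u : ℂ) :
    phase (t ^ a * u) = conj t ^ a * phase u := by
  rw [phase, phase, norm_mul, norm_pow, ht, one_pow, one_mul, map_mul, map_pow, mul_div_assoc]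

lemma continuousOn_phase : ContinuousOn phase {0}ᶜ :=
  (Complex.continuous_conj.continuousOn).div (by fun_prop)
    fun _ hu => by exact_mod_cast norm_ne_zero_iff.mpr hu

end Phase

section CellChart

variable {n i : ℕ} (χ : Fin (n + 1) → ℕ)

def cellChart (hi : i ≤ n) (z : Fin (n + 1) → ℂ) (k : Fin i) : ℂ :=
  phase (z (pivot n i)) ^ (χ (tailIdx hi k) / χ (pivot n i)) * z (tailIdx hi k)

variable {χ}

lemma cellChart_pow_mul (hdiv : ∀ j : Fin n, χ j.castSucc ∣ χ j.succ) (hi : i ≤ n)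
    {t : ℂ} (ht : ‖t‖ = 1) (z : Fin (n + 1) → ℂ) :
    cellChart χ hi (fun j => t ^ χ j * z j) = cellChart χ hi z := by
  funext k
  have hconj : conj t * t = 1 := by
    rw [Complex.conj_mul', ht, Complex.ofReal_one, one_pow]
  simp only [cellChart]
  set e := χ (tailIdx hi k) / χ (pivot n i)
  have he : χ (tailIdx hi k) = χ (pivot n i) * e :=
    (Nat.mul_div_cancel' (Fin.dvd_of_le_of_divisive hdiv (pivot_le_tailIdx hi k))).symm
  calc phase (t ^ χ (pivot n i) * z (pivot n i)) ^ e * (t ^ χ (tailIdx hi k) * z (tailIdx hi k))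
      = ((conj t * t) ^ χ (pivot n i)) ^ e * (phase (z (pivot n i)) ^ e * z (tailIdx hi k)) := by
        rw [phase_unit_pow_mul ht, he]; ring
    _ = phase (z (pivot n i)) ^ e * z (tailIdx hi k) := by rw [hconj, one_pow, one_pow, one_mul]

lemma cellChart_zvec (hi : i ≤ n) {w : Fin i → ℂ} (hw : ∑ k, normSq (w k) < 1) :
    cellChart χ hi (zvec n i hi w) = w := by
  funext k
  rw [cellChart, zvec_pivot, zvec_tailIdx,
    phase_ofReal_of_pos (Real.sqrt_pos.mpr (sub_pos.mpr hw)), one_pow, one_mul]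

lemma normSq_cellChart (hi : i ≤ n) {z : Fin (n + 1) → ℂ} (hz : z (pivot n i) ≠ 0) (k : Fin i) :
    normSq (cellChart χ hi z k) = normSq (z (tailIdx hi k)) := by
  rw [cellChart, normSq_mul, map_pow, Complex.normSq_eq_norm_sq (phase _), norm_phase hz,
    one_pow, one_pow, one_mul]

lemma continuousOn_cellChart (hi : i ≤ n) :
    ContinuousOn (cellChart χ hi) {z | z (pivot n i) ≠ 0} := by
  have hphase : ContinuousOn (fun z : Fin (n + 1) → ℂ => phase (z (pivot n i)))
      {z | z (pivot n i) ≠ 0} :=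
    continuousOn_phase.comp (continuous_apply _).continuousOn fun _ hz => hz
  exact continuousOn_pi.mpr fun k => (hphase.pow _).mul (continuous_apply _).continuousOn

variable (hi : i ≤ n) {z : Sph n} (hz0 : ∀ j : Fin (n + 1), (j : ℕ) + i < n → z.1 j = 0)
  (hz : z.1 (pivot n i) ≠ 0)
include hi hz0 hz

lemma sum_normSq_cellChart :
    ∑ k, normSq (cellChart χ hi z.1 k) = 1 - normSq (z.1 (pivot n i)) := by
  have hsum := z.2
  rw [sum_eq_pivot_add_sum_tailIdx hi fun j hj => by rw [hz0 j (by omega), map_zero]] at hsum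
  simp only [normSq_cellChart hi hz]
  linear_combination hsum

lemma exists_zvec_cellChart_eq_pow_mul (hp : 0 < χ (pivot n i))
    (hdiv : ∀ j : Fin n, χ j.castSucc ∣ χ j.succ) :
    ∃ t : ℂ, ‖t‖ = 1 ∧ ∀ j, zvec n i hi (cellChart χ hi z.1) j = t ^ χ j * z.1 j := by
  obtain ⟨t, ht⟩ := IsAlgClosed.exists_pow_nat_eq (phase (z.1 (pivot n i))) hp
  have htnorm : ‖t‖ = 1 := by
    rw [← pow_eq_one_iff_of_nonneg (norm_nonneg t) hp.ne', ← norm_pow, ht, norm_phase hz]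
  refine ⟨t, htnorm, fun j => ?_⟩
  rcases lt_or_eq_pivot_or_eq_tailIdx hi j with hj | rfl | ⟨k, rfl⟩
  · rw [zvec_of_lt hi _ hj, hz0 j (by omega), mul_zero]
  · rw [zvec_pivot, sum_normSq_cellChart hi hz0 hz, sub_sub_cancel, ← Complex.norm_def, ht,
      phase_mul_self]
  · rw [zvec_tailIdx, cellChart, ← ht, ← pow_mul, Nat.mul_div_cancel'
      (Fin.dvd_of_le_of_divisive hdiv (pivot_le_tailIdx hi k))]

end CellChart

section Quotient

variable {n i : ℕ} {χ : Fin (n + 1) → ℕ}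

def cellInv (hdiv : ∀ j : Fin n, χ j.castSucc ∣ χ j.succ) (hi : i ≤ n) :
    WPS n χ → Fin i → ℂ :=
  Quot.lift (fun z => cellChart χ hi z.1) fun z _ ⟨_, ht, hz⟩ => by
    rw [funext hz, cellChart_pow_mul hdiv hi ht]

variable (n i χ) in
def pivotNeZero : Set (WPS n χ) :=
  {q | Quot.lift (fun z : Sph n => z.1 (pivot n i) ≠ 0) (fun z _ ⟨t, ht, hz⟩ => by
    have ht0 : t ≠ 0 := norm_ne_zero_iff.mp (by rw [ht]; exact one_ne_zero)
    rw [hz, mul_ne_zero_iff, eq_iff_iff]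
    exact ⟨fun h => ⟨pow_ne_zero _ ht0, h⟩, And.right⟩) q}

lemma isOpen_pivotNeZero : IsOpen (pivotNeZero n i χ) :=
  isQuotientMap_quot_mk.isOpen_preimage.mp <|
    isOpen_ne_fun ((continuous_apply _).comp continuous_subtype_val) continuous_const

lemma cell_subset_pivotNeZero : cell n χ i ⊆ pivotNeZero n i χ := by
  rintro _ ⟨z, -, hz, rfl⟩
  exact hz

variable (hdiv : ∀ j : Fin n, χ j.castSucc ∣ χ j.succ) (hi : i ≤ n)
include hdiv

lemma continuousOn_cellInv : ContinuousOn (cellInv hdiv hi) (pivotNeZero n i χ) :=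
  (isQuotientMap_quot_mk.continuousOn_isOpen_iff isOpen_pivotNeZero).mpr <|
    (continuousOn_cellChart hi).comp continuous_subtype_val.continuousOn fun _ hz => hz

lemma cellInv_gmap {w : Fin i → ℂ} (hw : ∑ k, normSq (w k) < 1) :
    cellInv hdiv hi (gmap n χ i hi ⟨w, hw.le⟩) = w :=
  cellChart_zvec hi hw

lemma sum_normSq_cellInv_lt {p : WPS n χ} (hp : p ∈ cell n χ i) :
    ∑ k, normSq (cellInv hdiv hi p k) < 1 := by
  obtain ⟨z, hz0, hz, rfl⟩ := hp
  change ∑ k, normSq (cellChart χ hi z.1 k) < 1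
  rw [sum_normSq_cellChart hi hz0 hz]
  have hpivot : 0 < normSq (z.1 (pivot n i)) := normSq_pos.mpr hz
  linarith

lemma gmap_cellInv (hχ : 0 < χ (pivot n i)) {p : WPS n χ} (hp : p ∈ cell n χ i) :
    gmap n χ i hi ⟨cellInv hdiv hi p, (sum_normSq_cellInv_lt hdiv hi hp).le⟩ = p := by
  obtain ⟨z, hz0, hz, rfl⟩ := hp
  obtain ⟨t, ht, hzvec⟩ := exists_zvec_cellChart_eq_pow_mul hi hz0 hz hχ hdiv
  exact (Quot.sound ⟨t, ht, hzvec⟩).symm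

omit hdiv

lemma gmap_mem_cell {w : Fin i → ℂ} (hw : ∑ k, normSq (w k) < 1) :
    gmap n χ i hi ⟨w, hw.le⟩ ∈ cell n χ i := by
  refine ⟨_, fun j hj => zvec_of_lt hi w (by omega), ?_, rfl⟩
  show zvec n i hi w (pivot n i) ≠ 0
  rw [zvec_pivot, Complex.ofReal_ne_zero]
  exact (Real.sqrt_pos.mpr (sub_pos.mpr hw)).ne'

lemma continuous_gmap : Continuous (gmap n χ i hi) :=
  continuous_quot_mk.comp <| ((continuous_zvec hi).comp continuous_subtype_val).subtype_mk _

end Quotient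

theorem gmap_homeo_onto_cell_general (n : ℕ) (χ : Fin (n + 1) → ℕ) (hpos : ∀ j, 0 < χ j)
    (hdiv : ∀ j : Fin n, χ j.castSucc ∣ χ j.succ)
    (i : ℕ) (hi : i ≤ n) :
    ∃ e : {w : Fin i → ℂ // ∑ k, Complex.normSq (w k) < 1} ≃ₜ cell n χ i,
      ∀ w : {w : Fin i → ℂ // ∑ k, Complex.normSq (w k) < 1},
        (e w : WPS n χ) = gmap n χ i hi ⟨w.1, le_of_lt w.2⟩ := by
  refine ⟨{ toFun := fun w => ⟨gmap n χ i hi ⟨w.1, w.2.le⟩, gmap_mem_cell hi w.2⟩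
            invFun := fun p => ⟨cellInv hdiv hi p, sum_normSq_cellInv_lt hdiv hi p.2⟩
            left_inv := fun w => Subtype.ext (cellInv_gmap hdiv hi w.2)
            right_inv := fun p => Subtype.ext (gmap_cellInv hdiv hi (hpos _) p.2)
            continuous_toFun := ?_
            continuous_invFun := ?_ }, fun w => rfl⟩
  · exact ((continuous_gmap hi).comp (continuous_subtype_val.subtype_mk _)).subtype_mk _
  · exact ((continuousOn_cellInv hdiv hi).comp_continuous continuous_subtype_val
      fun p => cell_subset_pivotNeZero p.2).subtype_mk _

/-- For a divisive weight vector `χ` and `1 ≤ i ≤ n`, the restriction of `gᵢ` to the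
open unit disc `{w ∈ ℂⁱ : |w| < 1}` is a homeomorphism onto the subspace
`{[z] ∈ ℙ(χ) : z₀ = ⋯ = z_{n−i−1} = 0, z_{n−i} ≠ 0}` of `ℙ(χ)` (for `i = n` the
condition is simply `z₀ ≠ 0`). -/
theorem gmap_homeo_onto_cell (n : ℕ) (χ : Fin (n + 1) → ℕ) (hpos : ∀ j, 0 < χ j)
    (hdiv : ∀ j : Fin n, χ j.castSucc ∣ χ j.succ)
    (i : ℕ) (hi1 : 1 ≤ i) (hi : i ≤ n) :
    ∃ e : {w : Fin i → ℂ // ∑ k, Complex.normSq (w k) < 1} ≃ₜ cell n χ i,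
      ∀ w : {w : Fin i → ℂ // ∑ k, Complex.normSq (w k) < 1},
        (e w : WPS n χ) = gmap n χ i hi ⟨w.1, le_of_lt w.2⟩ :=
  gmap_homeo_onto_cell_general n χ hpos hdiv i hi
end
end

section
/- (Example 4.9, K-theory, module structure) The ring P_K(α) of integral piecewise Laurent polynomials on the fan Σ_{(1,1,2)} is a free module over the Laurent polynomial ring S^±_ℤ(α_1,α_2) = ℤ[α_1^{±1},α_2^{±1}] (acting diagonally) with basis {(1,1,1), ε, ζ}, where ε = (0, 1−α_1², 1−α_2) and ζ = (0, (1−α_1)(α_2−α_1²), 0). -/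
noncomputable section

/-- The Laurent polynomial ring `S^±_ℤ(α₁,α₂) = ℤ[α₁^{±1},α₂^{±1}]`, realised as the
group algebra of `ℤ²` over `ℤ`. -/
abbrev L2 := AddMonoidAlgebra ℤ (Fin 2 → ℤ)

/-- The monomial `α₁`. -/
def alpha1 : L2 := AddMonoidAlgebra.single ![1, 0] 1

/-- The monomial `α₂`. -/
def alpha2 : L2 := AddMonoidAlgebra.single ![0, 1] 1

/-- The ring of integral piecewise Laurent polynomials on the fan `Σ_{(1,1,2)}` of
`ℙ(1,1,2)`: triples `(f₀, f₁, f₂)` in `S^±_ℤ(α₁,α₂)` (component `fᵢ` attached to the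
maximal cone `σᵢ`) with `(1−α₁) ∣ f₀ − f₁`, `(1−α₂) ∣ f₀ − f₂` and
`(1−α₁²α₂^{−1}) ∣ f₁ − f₂`. -/
def PK112 : Set (Fin 3 → L2) :=
  {f | (1 - alpha1) ∣ f 0 - f 1 ∧ (1 - alpha2) ∣ f 0 - f 2 ∧
    (1 - AddMonoidAlgebra.single ![2, -1] 1) ∣ f 1 - f 2}

/-- The piecewise Laurent polynomial `ε = (0, 1−α₁², 1−α₂)`. -/
def epsElt : Fin 3 → L2 := ![0, 1 - alpha1 ^ 2, 1 - alpha2]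

/-- The piecewise Laurent polynomial `ζ = (0, (1−α₁)(α₂−α₁²), 0)`. -/
def zetaElt : Fin 3 → L2 := ![0, (1 - alpha1) * (alpha2 - alpha1 ^ 2), 0]

/-!
Taking `a = f₀` and then `b` from `(1 - α₂) ∣ f₀ - f₂` reduces `f` to a triple `(0, x, 0)`
with `1 - α₁ ∣ x` and `1 - γ ∣ x`, where `γ = α₁²α₂⁻¹`. Since `ζ₁ = α₂ (1 - α₁)(1 - γ)`, it
remains to see that these two divisibilities give `(1 - α₁)(1 - γ) ∣ x`. The ring
endomorphism `φ : α₁ ↦ α₁, γ ↦ 1` fixes `1 - α₁`, kills `1 - γ` and is the identity modulo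
`1 - γ`; applying it to `x = (1 - α₁) u = (1 - γ) v` gives `(1 - α₁) φ(u) = 0`, so `φ(u) = 0`
and `1 - γ ∣ u`.
Uniqueness holds because `1 - α₂` and `ζ₁` are nonzero in the domain `ℤ[ℤ²]`.
-/

theorem mul_dvd_of_dvd_of_dvd_of_ringHom {A : Type*} [CommRing A] [NoZeroDivisors A]
    (φ : A →+* A) {s t x : A} (hφ : ∀ a, t ∣ a - φ a) (ht : φ t = 0) (hs : φ s = s)
    (hs0 : s ≠ 0) (hsx : s ∣ x) (htx : t ∣ x) : s * t ∣ x := by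
  obtain ⟨u, rfl⟩ := hsx
  obtain ⟨v, hv⟩ := htx
  have hu : φ u = 0 := by
    have h := congrArg φ hv
    rw [map_mul, map_mul, ht, zero_mul, hs] at h
    exact (mul_eq_zero.mp h).resolve_left hs0
  simpa [hu] using mul_dvd_mul_left s (hφ u)

namespace AddMonoidAlgebra

variable {R G : Type*} [CommRing R] [AddCommGroup G]

theorem isUnit_single_one (v : G) : IsUnit (single v 1 : R[G]) :=
  .of_mul_eq_one (single (-v) 1) <| by
    rw [single_mul_single, add_neg_cancel, mul_one, one_def]

theorem one_sub_single_ne_zero [Nontrivial R] {w : G} (hw : w ≠ 0) :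
    (1 : R[G]) - single w 1 ≠ 0 := by
  rw [sub_ne_zero, one_def, Ne, single_left_inj one_ne_zero]
  exact hw.symm

theorem one_sub_single_dvd_single_sub_one {w d : G} (hd : d ∈ AddSubgroup.zmultiples w) :
    (1 - single w 1 : R[G]) ∣ single d 1 - 1 := by
  let H : AddSubgroup G :=
    { carrier := {d | (1 - single w 1 : R[G]) ∣ single d 1 - 1}
      zero_mem' := by simp [← one_def]
      add_mem' := fun {d e} hd he => by
        have h : (single (d + e) 1 - 1 : R[G])
            = single d 1 * (single e 1 - 1) + (single d 1 - 1) := by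
          rw [mul_sub, single_mul_single, mul_one, mul_one]
          ring
        rw [Set.mem_ofPred_eq, h]
        exact dvd_add (he.mul_left _) hd
      neg_mem' := fun {d} hd => by
        have h : (single (-d) 1 - 1 : R[G]) = -(single (-d) 1 * (single d 1 - 1)) := by
          rw [mul_sub, single_mul_single, neg_add_cancel, mul_one, mul_one, ← one_def]
          ring
        rw [Set.mem_ofPred_eq, h]
        exact (hd.mul_left _).neg_right }
  have hw : w ∈ H := dvd_neg.mp (by rw [neg_sub])
  exact AddSubgroup.zmultiples_le_of_mem hw hd

theorem one_sub_single_dvd_sub_mapDomainRingHom (p : G →+ G) {w : G}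
    (hp : ∀ v, v - p v ∈ AddSubgroup.zmultiples w) (f : R[G]) :
    (1 - single w 1 : R[G]) ∣ f - mapDomainRingHom R p f := by
  induction f using AddMonoidAlgebra.induction with
  | zero => simp
  | single_add v r f _ _ ih =>
    have hv : single v r - mapDomainRingHom R p (single v r)
        = single (p v) r * (single (v - p v) 1 - 1) := by
      rw [mapDomainRingHom_apply, mapDomain_single, mul_sub, single_mul_single,
        add_sub_cancel, mul_one, mul_one]
    rw [map_add, add_sub_add_comm, hv]
    exact dvd_add ((one_sub_single_dvd_single_sub_one (hp v)).mul_left _) ih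

end AddMonoidAlgebra

open AddMonoidAlgebra

/-- For `w 1 = ±1`, the projection of `ℤ²` onto `ℤ × 0` along `w`. -/
def collapseAlong (w : Fin 2 → ℤ) : (Fin 2 → ℤ) →+ (Fin 2 → ℤ) where
  toFun v := ![v 0 - w 0 * w 1 * v 1, 0]
  map_zero' := by ext i; fin_cases i <;> simp
  map_add' a b := by ext i; fin_cases i <;> simp; ring

section collapseAlong

variable {w : Fin 2 → ℤ}

theorem collapseAlong_apply_zero (v : Fin 2 → ℤ) :
    collapseAlong w v 0 = v 0 - w 0 * w 1 * v 1 := rfl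

theorem collapseAlong_apply_one (v : Fin 2 → ℤ) : collapseAlong w v 1 = 0 := rfl

theorem sub_collapseAlong_mem_zmultiples (hw : w 1 * w 1 = 1) (v : Fin 2 → ℤ) :
    v - collapseAlong w v ∈ AddSubgroup.zmultiples w := by
  refine ⟨w 1 * v 1, funext <| Fin.forall_fin_two.mpr ⟨?_, ?_⟩⟩
  all_goals simp only [Pi.smul_apply, smul_eq_mul, Pi.sub_apply, collapseAlong_apply_zero,
    collapseAlong_apply_one]
  · ring
  · linear_combination v 1 * hw

theorem collapseAlong_self (hw : w 1 * w 1 = 1) : collapseAlong w w = 0 := by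
  refine funext <| Fin.forall_fin_two.mpr ⟨?_, collapseAlong_apply_one w⟩
  rw [collapseAlong_apply_zero, Pi.zero_apply]
  linear_combination (-w 0) * hw

theorem collapseAlong_single_zero : collapseAlong w ![1, 0] = ![1, 0] :=
  funext <| Fin.forall_fin_two.mpr ⟨by simp [collapseAlong_apply_zero], collapseAlong_apply_one _⟩

end collapseAlong

theorem one_sub_alpha1_mul_dvd {w : Fin 2 → ℤ} (hw : w 1 * w 1 = 1) {x : L2}
    (h1 : 1 - alpha1 ∣ x) (h2 : 1 - single w 1 ∣ x) : (1 - alpha1) * (1 - single w 1) ∣ x := by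
  refine mul_dvd_of_dvd_of_dvd_of_ringHom (mapDomainRingHom ℤ (collapseAlong w))
    (one_sub_single_dvd_sub_mapDomainRingHom _ (sub_collapseAlong_mem_zmultiples hw)) ?_ ?_
    (one_sub_single_ne_zero (by simp)) h1 h2
  · rw [map_sub, map_one, mapDomainRingHom_apply, mapDomain_single, collapseAlong_self hw,
      ← one_def, sub_self]
  · rw [alpha1, map_sub, map_one, mapDomainRingHom_apply, mapDomain_single,
      collapseAlong_single_zero]

local notation "γ" => (single ![2, -1] 1 : L2)

theorem alpha2_mul_gamma : alpha2 * γ = alpha1 ^ 2 := by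
  simp [alpha1, alpha2, sq, single_mul_single]

theorem epsElt_zero : epsElt 0 = 0 := rfl

theorem epsElt_one : epsElt 1 = 1 - alpha1 ^ 2 := rfl

theorem epsElt_two : epsElt 2 = 1 - alpha2 := rfl

theorem zetaElt_zero : zetaElt 0 = 0 := rfl

theorem zetaElt_one : zetaElt 1 = (1 - alpha1) * (alpha2 - alpha1 ^ 2) := rfl

theorem zetaElt_two : zetaElt 2 = 0 := rfl

theorem zetaElt_one_eq_mul : zetaElt 1 = alpha2 * ((1 - alpha1) * (1 - γ)) := by
  rw [zetaElt_one]
  linear_combination (1 - alpha1) * alpha2_mul_gamma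

theorem zetaElt_one_ne_zero : zetaElt 1 ≠ 0 := by
  rw [zetaElt_one_eq_mul]
  exact mul_ne_zero (isUnit_single_one _).ne_zero <|
    mul_ne_zero (one_sub_single_ne_zero (by simp)) (one_sub_single_ne_zero (by simp))

namespace PK112

theorem epsElt_mem : epsElt ∈ PK112 :=
  ⟨⟨-(1 + alpha1), by rw [epsElt_zero, epsElt_one]; ring⟩,
    ⟨-1, by rw [epsElt_zero, epsElt_two]; ring⟩,
    ⟨alpha2, by rw [epsElt_one, epsElt_two]; linear_combination alpha2_mul_gamma⟩⟩

theorem zetaElt_mem : zetaElt ∈ PK112 :=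
  ⟨⟨-(alpha2 - alpha1 ^ 2), by rw [zetaElt_zero, zetaElt_one]; ring⟩,
    ⟨0, by rw [zetaElt_zero, zetaElt_two]; ring⟩,
    ⟨(1 - alpha1) * alpha2, by rw [zetaElt_one_eq_mul, zetaElt_two]; ring⟩⟩

theorem const_mem (a : L2) : (fun _ => a : Fin 3 → L2) ∈ PK112 := by
  simp [PK112]

def combination (abc : L2 × L2 × L2) : Fin 3 → L2 :=
  fun k => abc.1 + abc.2.1 * epsElt k + abc.2.2 * zetaElt k

theorem exists_combination_eq {f : Fin 3 → L2} (hf : f ∈ PK112) :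
    ∃ abc, combination abc = f := by
  obtain ⟨h01, ⟨q, hq⟩, h12⟩ := hf
  set x := f 1 - f 0 + q * (1 - alpha1 ^ 2) with hx
  have hx1 : 1 - alpha1 ∣ x :=
    dvd_add (dvd_sub_comm.mp h01) ((Dvd.intro (1 + alpha1) (by ring)).mul_left q)
  have hxγ : 1 - γ ∣ x := by
    have h : x = (f 1 - f 2) + q * alpha2 * (1 - γ) := by
      linear_combination -hq + q * alpha2_mul_gamma
    rw [h]
    exact dvd_add h12 (Dvd.intro_left _ rfl)
  obtain ⟨c, hc⟩ : zetaElt 1 ∣ x := by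
    rw [zetaElt_one_eq_mul, (isUnit_single_one _).mul_left_dvd]
    exact one_sub_alpha1_mul_dvd (by norm_num) hx1 hxγ
  refine ⟨(f 0, -q, c), funext fun k => ?_⟩
  fin_cases k <;> simp only [combination, Fin.zero_eta, Fin.mk_one, Fin.reduceFinMk,
    epsElt_zero, epsElt_one, epsElt_two, zetaElt_zero, zetaElt_two]
  · ring
  · linear_combination hx - hc
  · linear_combination hq

theorem combination_injective : Function.Injective combination := by
  rintro ⟨a, b, c⟩ ⟨a', b', c'⟩ h
  have h0 := congrFun h 0
  have h1 := congrFun h 1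
  have h2 := congrFun h 2
  simp only [combination, epsElt_zero, epsElt_one, epsElt_two, zetaElt_zero, zetaElt_two,
    mul_zero, add_zero] at h0 h1 h2
  obtain rfl : a = a' := h0
  obtain rfl : b = b' := mul_right_cancel₀ (one_sub_single_ne_zero (by simp)) <|
    show b * (1 - alpha2) = b' * (1 - alpha2) by linear_combination h2
  obtain rfl : c = c' := mul_right_cancel₀ zetaElt_one_ne_zero <| by linear_combination h1
  rfl

end PK112

/-- **Example 4.9, K-theory, module structure.**
`P_K(α)` for `Σ_{(1,1,2)}` is a free module over `S^±_ℤ(α₁,α₂)` (acting diagonally)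
with basis `{1, ε, ζ}`: the diagonal constants, `ε` and `ζ` lie in `P_K(α)`, and every
`f ∈ P_K(α)` is uniquely `a·1 + b·ε + c·ζ` with `a, b, c ∈ S^±_ℤ(α₁,α₂)`. -/
theorem PK112_free_module :
    epsElt ∈ PK112 ∧ zetaElt ∈ PK112 ∧
    (∀ a : L2, (fun _ => a : Fin 3 → L2) ∈ PK112) ∧
    ∀ f ∈ PK112, ∃! abc : L2 × L2 × L2,
      f = fun k => abc.1 + abc.2.1 * epsElt k + abc.2.2 * zetaElt k := by
  refine ⟨PK112.epsElt_mem, PK112.zetaElt_mem, PK112.const_mem, fun f hf => ?_⟩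
  obtain ⟨abc, rfl⟩ := PK112.exists_combination_eq hf
  exact ⟨abc, rfl, fun abc' h => PK112.combination_injective h.symm⟩
end
end
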